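/- arXiv:1112.1759 — 12 statements merged into one kernel-verified Lean document; each statement's English description precedes it below -/
import Mathlib

section
/- Let ψ and θ be real numbers with 1 < ψ ≤ θ. Let (n_i)_{i≥1} be a strictly increasing sequence of positive integers and let (ε_i)_{i≥1} be a sequence of integers such that n_i + ε_i ≥ 1 for all i and ε_i/n_i → 0 as i → ∞. If M_ψ(n_i + ε_i) = M_θ(n_i) for all sufficiently large i (in particular, both values are finite), then ψ = θ. -/
open Real

/-- `M θ n = ⌊1 / {θ^(1/n)}⌋`, the integer part of the reciprocal of the
fractional part of the `n`-th root of `θ`. -/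
noncomputable def M (θ : ℝ) (n : ℕ) : ℤ := ⌊1 / Int.fract (θ ^ ((n : ℝ)⁻¹))⌋

/-!
Since `θ ^ (1/n) - 1 ~ log θ / n`, the fractional part `{θ ^ (1/n)}` is eventually
`θ ^ (1/n) - 1` and `M θ n ~ n / log θ`. As `n_i + ε_i ~ n_i`, the hypothesis gives
`n_i / log ψ ~ M ψ (n_i + ε_i) = M θ n_i ~ n_i / log θ`, so `log ψ = log θ`.
-/

open Filter Topology

theorem tendsto_natCast_mul_rpow_inv_sub_one {θ : ℝ} (hθ : 0 < θ) :
    Tendsto (fun n : ℕ => n * (θ ^ (n : ℝ)⁻¹ - 1)) atTop (𝓝 (log θ)) := by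
  have h := (tendsto_rpow_sub_one_log hθ).comp
    (tendsto_inv_atTop_nhdsGT_zero.comp (tendsto_natCast_atTop_atTop (R := ℝ)))
  simpa only [Function.comp_def, inv_inv] using h

theorem tendsto_floor_div_of_tendsto_div {α : Type*} {l : Filter α} {f g : α → ℝ} {L : ℝ}
    (hg : Tendsto g l atTop) (hfg : Tendsto (fun x => f x / g x) l (𝓝 L)) :
    Tendsto (fun x => (⌊f x⌋ : ℝ) / g x) l (𝓝 L) := by
  have hlower : Tendsto (fun x => f x / g x - (g x)⁻¹) l (𝓝 L) := by
    simpa using hfg.sub hg.inv_tendsto_atTop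
  refine tendsto_of_tendsto_of_tendsto_of_le_of_le' hlower hfg ?_ ?_
  all_goals filter_upwards [hg.eventually_gt_atTop 0] with x hx
  · rw [inv_eq_one_div, div_sub_div_same, div_le_div_iff_of_pos_right hx]
    exact (Int.sub_one_lt_floor _).le
  · exact div_le_div_of_nonneg_right (Int.floor_le _) hx.le

theorem fract_eq_sub_one {x : ℝ} (h₁ : 1 ≤ x) (h₂ : x < 2) : Int.fract x = x - 1 :=
  Int.fract_eq_iff.2 ⟨by linarith, by linarith, 1, by push_cast; ring⟩

theorem eventually_M_eq_floor {θ : ℝ} (hθ : 1 < θ) :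
    ∀ᶠ n : ℕ in atTop, M θ n = ⌊1 / (θ ^ (n : ℝ)⁻¹ - 1)⌋ := by
  have hroot : Tendsto (fun n : ℕ => θ ^ (n : ℝ)⁻¹) atTop (𝓝 1) := by
    simpa using tendsto_const_nhds.rpow tendsto_inv_atTop_nhds_zero_nat (Or.inl (by positivity))
  filter_upwards [hroot.eventually (eventually_lt_nhds one_lt_two)] with n hn
  rw [M, fract_eq_sub_one (one_le_rpow hθ.le (by positivity)) hn]

theorem tendsto_M_div_natCast {θ : ℝ} (hθ : 1 < θ) :
    Tendsto (fun n : ℕ => (M θ n : ℝ) / n) atTop (𝓝 (log θ)⁻¹) := by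
  have hlim := (tendsto_natCast_mul_rpow_inv_sub_one (zero_lt_one.trans hθ)).inv₀ (log_pos hθ).ne'
  refine (tendsto_floor_div_of_tendsto_div (f := fun n : ℕ => 1 / (θ ^ (n : ℝ)⁻¹ - 1))
    tendsto_natCast_atTop_atTop ?_).congr' ?_
  · refine hlim.congr fun n => ?_
    rw [div_div, mul_comm, one_div]
  · filter_upwards [eventually_M_eq_floor hθ] with n hn
    rw [hn]

theorem tendsto_apply_div_of_div_tendsto_one {ι : Type*} {l : Filter ι} {u : ℕ → ℝ} {L : ℝ}
    (hu : Tendsto (fun k : ℕ => u k / k) atTop (𝓝 L)) {a : ι → ℕ} {b : ι → ℝ}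
    (hb : Tendsto b l atTop) (hab : Tendsto (fun i => (a i : ℝ) / b i) l (𝓝 1)) :
    Tendsto (fun i => u (a i) / b i) l (𝓝 L) := by
  have ha : Tendsto (fun i => (a i : ℝ)) l atTop :=
    (hab.pos_mul_atTop one_pos hb).congr' <| by
      filter_upwards [hb.eventually_ne_atTop 0] with i hi
      exact div_mul_cancel₀ _ hi
  have := (hu.comp (tendsto_natCast_atTop_iff.1 ha)).mul hab
  rw [mul_one] at this
  refine this.congr' ?_
  filter_upwards [ha.eventually_ne_atTop 0] with i hi
  simp only [Function.comp_apply]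
  exact div_mul_div_cancel₀ hi

theorem abs_toNat_add_sub_le (n : ℕ) (ε : ℤ) :
    |(((n : ℤ) + ε).toNat : ℝ) - n| ≤ |(ε : ℝ)| := by
  have h := abs_max_sub_max_le_abs ((n : ℤ) + ε) n 0
  rw [← Int.toNat_eq_max, max_eq_left (Int.natCast_nonneg n), add_sub_cancel_left] at h
  exact_mod_cast h

theorem tendsto_toNat_add_div_natCast {ι : Type*} {l : Filter ι} {n : ι → ℕ} {ε : ι → ℤ}
    (hn : Tendsto n l atTop) (hε : Tendsto (fun i => (ε i : ℝ) / n i) l (𝓝 0)) :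
    Tendsto (fun i => (((n i : ℤ) + ε i).toNat : ℝ) / n i) l (𝓝 1) := by
  rw [tendsto_iff_norm_sub_tendsto_zero]
  refine squeeze_zero_norm' ?_ (by simpa using hε.norm)
  filter_upwards [hn.eventually_ne_atTop 0] with i hi
  have hi' : (n i : ℝ) ≠ 0 := Nat.cast_ne_zero.2 hi
  simp only [Real.norm_eq_abs, abs_abs]
  rw [div_sub_one hi', abs_div, Nat.abs_cast]
  exact div_le_div_of_nonneg_right (abs_toNat_add_sub_le _ _) (Nat.cast_nonneg _)

theorem stmt_4_general (ψ θ : ℝ) (hψ : 1 < ψ) (hψθ : ψ ≤ θ)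
    (n : ℕ → ℕ) (hn : StrictMono n)
    (ε : ℕ → ℤ)
    (hε : Filter.Tendsto (fun i => (ε i : ℝ) / (n i : ℝ)) Filter.atTop (nhds 0))
    (hM : ∀ᶠ i in Filter.atTop, M ψ ((n i : ℤ) + ε i).toNat = M θ (n i)) :
    ψ = θ := by
  have hθ : 1 < θ := hψ.trans_le hψθ
  have hψlim := tendsto_apply_div_of_div_tendsto_one (tendsto_M_div_natCast hψ)
    (tendsto_natCast_atTop_atTop.comp hn.tendsto_atTop)
    (tendsto_toNat_add_div_natCast hn.tendsto_atTop hε)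
  have hθlim := (tendsto_M_div_natCast hθ).comp hn.tendsto_atTop
  have hlog : (log ψ)⁻¹ = (log θ)⁻¹ := by
    refine tendsto_nhds_unique (hψlim.congr' ?_) hθlim
    filter_upwards [hM] with i hi
    simp only [hi, Function.comp_apply]
  exact log_injOn_pos (zero_lt_one.trans hψ) (zero_lt_one.trans hθ) (inv_inj.1 hlog)

theorem stmt_4 (ψ θ : ℝ) (hψ : 1 < ψ) (hψθ : ψ ≤ θ)
    (n : ℕ → ℕ) (hn : StrictMono n) (hn1 : ∀ i, 1 ≤ n i)
    (ε : ℕ → ℤ) (hnε : ∀ i, 1 ≤ (n i : ℤ) + ε i)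
    (hε : Filter.Tendsto (fun i => (ε i : ℝ) / (n i : ℝ)) Filter.atTop (nhds 0))
    (hM : ∀ᶠ i in Filter.atTop, M ψ ((n i : ℤ) + ε i).toNat = M θ (n i)) :
    ψ = θ :=
  stmt_4_general ψ θ hψ hψθ n hn ε hε hM
end

section
/- Let ψ and θ be real numbers with 1 < ψ ≤ θ. If M_ψ(n) = M_θ(n) for infinitely many positive integers n with n > log θ / log 2, then ψ = θ. -/
open Real

lemma M_eq_aux (c : ℝ) (n : ℕ) (hc : 1 < c) (hn : 0 < n)
    (h2 : Real.log c / n < Real.log 2) :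
    M c n = ⌊1 / (Real.exp (Real.log c / n) - 1)⌋ := by
  have hc0 : 0 < c := by linarith
  have hn0 : (0:ℝ) < n := by exact_mod_cast hn
  have hrw : c ^ ((n : ℝ)⁻¹) = Real.exp (Real.log c / n) := by
    rw [Real.rpow_def_of_pos hc0]
    ring_nf
  have hlogc : 0 < Real.log c := Real.log_pos hc
  have h1 : 1 < Real.exp (Real.log c / n) := by
    rw [show (1:ℝ) = Real.exp 0 by simp]
    exact Real.exp_lt_exp.mpr (div_pos hlogc hn0)
  have h2' : Real.exp (Real.log c / n) < 2 := by
    calc Real.exp (Real.log c / n) < Real.exp (Real.log 2) := Real.exp_lt_exp.mpr h2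
      _ = 2 := Real.exp_log two_pos
  have hfl : ⌊Real.exp (Real.log c / n)⌋ = 1 := by
    rw [Int.floor_eq_iff]
    constructor <;> push_cast <;> linarith
  have hfr : Int.fract (Real.exp (Real.log c / n)) = Real.exp (Real.log c / n) - 1 := by
    rw [Int.fract, hfl]
    push_cast
    ring
  unfold M
  rw [hrw, hfr]

set_option maxHeartbeats 1000000 in
theorem stmt_5 (ψ θ : ℝ) (hψ : 1 < ψ) (hψθ : ψ ≤ θ)
    (h : {n : ℕ | 0 < n ∧ (n : ℝ) > Real.log θ / Real.log 2 ∧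
      M ψ n = M θ n}.Infinite) :
    ψ = θ := by
  by_contra hne
  have hψθ' : ψ < θ := lt_of_le_of_ne hψθ hne
  have hθ : 1 < θ := lt_of_lt_of_le hψ hψθ
  set a := Real.log θ with ha_def
  set b := Real.log ψ with hb_def
  have hb : 0 < b := Real.log_pos hψ
  have hab : b < a := Real.log_lt_log (by linarith) hψθ'
  have ha : 0 < a := hb.trans hab
  obtain ⟨N, hN⟩ := exists_nat_gt (4 * a ^ 2 / (a - b))
  obtain ⟨n, hn_mem, hn_gt⟩ := h.exists_gt N
  obtain ⟨hn0, hnlog, hMeq⟩ := hn_mem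
  have hn0' : (0:ℝ) < n := by exact_mod_cast hn0
  have hnN : (4 * a ^ 2 / (a - b)) < (n : ℝ) := by
    have : (N : ℝ) < n := by exact_mod_cast hn_gt
    linarith
  have hlog2 : 0 < Real.log 2 := Real.log_pos one_lt_two
  have ht2 : a / n < Real.log 2 := by
    rw [div_lt_iff₀ hn0']
    have h1 : a / Real.log 2 < n := hnlog
    rw [div_lt_iff₀ hlog2] at h1
    linarith
  have hs2 : b / n < Real.log 2 := by
    have hle : b / n ≤ a / n := by gcongr <;> linarith
    linarith
  -- abbreviations
  set t := a / n with ht_def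
  set s := b / n with hs_def
  have hs0 : 0 < s := div_pos hb hn0'
  have ht0 : 0 < t := div_pos ha hn0'
  have hst : s ≤ t := by rw [ht_def, hs_def]; gcongr <;> linarith
  set x := Real.exp t - 1 with hx_def
  set y := Real.exp s - 1 with hy_def
  have hy0 : 0 < y := by
    have : 1 < Real.exp s := by
      rw [show (1:ℝ) = Real.exp 0 by simp]
      exact Real.exp_lt_exp.mpr hs0
    simp [hy_def]; linarith
  have hyx : y ≤ x := by
    have := Real.exp_le_exp.mpr hst
    simp [hx_def, hy_def]; linarith
  have hx0 : 0 < x := lt_of_lt_of_le hy0 hyx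
  -- upper bound on x : exp t - 1 ≤ 2 t
  have hexpt2 : Real.exp t < 2 := by
    calc Real.exp t < Real.exp (Real.log 2) := Real.exp_lt_exp.mpr ht2
      _ = 2 := Real.exp_log two_pos
  have hx_le : x ≤ 2 * t := by
    have h1 : (-t) + 1 ≤ Real.exp (-t) := Real.add_one_le_exp (-t)
    have h2 : Real.exp t * Real.exp (-t) = 1 := by
      rw [← Real.exp_add]; simp
    have h3 : 0 < Real.exp t := Real.exp_pos t
    nlinarith [h3, ht0.le]
  -- lower bound on x - y : exp t - exp s ≥ t - s
  have hxy_lb : t - s ≤ x - y := by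
    have h1 : (t - s) + 1 ≤ Real.exp (t - s) := Real.add_one_le_exp (t - s)
    have h2 : Real.exp t = Real.exp s * Real.exp (t - s) := by
      rw [← Real.exp_add]; ring_nf
    have h3 : 1 ≤ Real.exp s := by
      rw [show (1:ℝ) = Real.exp 0 by simp]
      exact Real.exp_le_exp.mpr hs0.le
    nlinarith
  -- floors are equal
  have hMψ : M ψ n = ⌊1 / y⌋ := M_eq_aux ψ n hψ hn0 hs2
  have hMθ : M θ n = ⌊1 / x⌋ := M_eq_aux θ n hθ hn0 ht2
  have hfleq : ⌊1 / y⌋ = ⌊1 / x⌋ := by rw [← hMψ, ← hMθ]; exact hMeq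
  clear_value x y
  clear_value t s
  clear_value a b
  -- from equal floors: 1/y - 1/x < 1
  have hdiff : 1 / y - 1 / x < 1 := by
    have h1 : (1:ℝ) / y < ⌊1 / y⌋ + 1 := Int.lt_floor_add_one _
    have h2 : ((⌊1 / x⌋ : ℝ)) ≤ 1 / x := Int.floor_le _
    rw [hfleq] at h1
    linarith
  -- clear denominators: x - y < x * y
  have hxy_lt : x - y < x * y := by
    have e1 : x * y * (1 / y) = x := by field_simp
    have e2 : x * y * (1 / x) = y := by field_simp
    have e3 : x * y * (1 / y - 1 / x) < x * y * 1 :=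
      mul_lt_mul_of_pos_left hdiff (mul_pos hx0 hy0)
    linarith [e1, e2, e3]
  -- combine: (a-b)/n ≤ x - y < x*y ≤ 4a²/n², but (a-b)*n > 4a²
  have hts : t - s = (a - b) / n := by rw [ht_def, hs_def]; ring
  have hxy_ub : x * y ≤ 4 * a ^ 2 / n ^ 2 := by
    have hyle : y ≤ 2 * t := le_trans hyx hx_le
    have : x * y ≤ (2 * t) * (2 * t) := by
      apply mul_le_mul hx_le hyle hy0.le (by linarith)
    calc x * y ≤ (2 * t) * (2 * t) := this
      _ = 4 * a ^ 2 / n ^ 2 := by rw [ht_def]; field_simp; ring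
  have hbig : 4 * a ^ 2 < (a - b) * n := by
    rw [div_lt_iff₀ (by linarith : (0:ℝ) < a - b)] at hnN
    linarith
  have h1 : (a - b) / n ≤ x - y := by rw [← hts]; exact hxy_lb
  have h2 : (a - b) / n < 4 * a ^ 2 / n ^ 2 :=
    h1.trans_lt (hxy_lt.trans_le hxy_ub)
  rw [div_lt_div_iff₀ hn0' (by positivity)] at h2
  nlinarith [mul_lt_mul_of_pos_right hbig hn0']
end

section
/- Let θ be a real number with 1 < θ ≤ e, and let n be an integer with n > log θ / log 2 and n ≥ 2. Then (n − 1)/log θ < 1/(θ^{1/n} − 1) < n/log θ. -/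
/-! With x = log θ / n we have θ^{1/n} = eˣ, and both bounds come from x < eˣ - 1 ≤ x + x²:
the upper one directly, the lower one because (n - 1) x < 1 when log θ ≤ 1. -/

open Real

lemma one_div_exp_sub_one_lt_one_div {x : ℝ} (hx : 0 < x) : 1 / (exp x - 1) < 1 / x :=
  one_div_lt_one_div_of_lt hx (by linarith [add_one_lt_exp hx.ne'])

lemma exp_sub_one_le_add_sq {x : ℝ} (hx : |x| ≤ 1) : exp x - 1 ≤ x + x ^ 2 := by
  linarith [(abs_le.mp (abs_exp_sub_one_sub_id_le hx)).2]

lemma sub_one_div_lt_one_div_exp_div_sub_one {y t : ℝ} (hy : 0 < y) (hy1 : y ≤ 1)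
    (ht : 1 ≤ t) : (t - 1) / y < 1 / (exp (y / t) - 1) := by
  set x := y / t with hx
  have hx0 : 0 < x := div_pos hy (by linarith)
  have hy_eq : y = t * x := by rw [hx, mul_div_cancel₀ _ (by linarith)]
  have hx1 : x ≤ 1 := by nlinarith
  have hexp : 0 < exp x - 1 := by linarith [add_one_lt_exp hx0.ne']
  rw [div_lt_div_iff₀ hy hexp, one_mul]
  calc (t - 1) * (exp x - 1)
      ≤ (t - 1) * (x + x ^ 2) :=
        mul_le_mul_of_nonneg_left (exp_sub_one_le_add_sq (by rwa [abs_of_pos hx0])) (by linarith)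
    _ = y - x * (1 - y + x) := by rw [hy_eq]; ring
    _ < y := by nlinarith

theorem stmt_6_general (θ : ℝ) (hθ : 1 < θ) (hθe : θ ≤ Real.exp 1) (n : ℕ) (hn : 2 ≤ n) :
    (n - 1 : ℝ) / Real.log θ < 1 / (θ ^ ((n : ℝ)⁻¹) - 1) ∧
    1 / (θ ^ ((n : ℝ)⁻¹) - 1) < (n : ℝ) / Real.log θ := by
  have hlog_pos : 0 < log θ := log_pos hθ
  have hlog_le_one : log θ ≤ 1 := (log_le_iff_le_exp (by linarith)).2 hθe
  have hn_one : (1 : ℝ) ≤ n := by exact_mod_cast (by omega : 1 ≤ n)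
  have hroot : θ ^ ((n : ℝ)⁻¹) = exp (log θ / n) := by
    rw [rpow_def_of_pos (by linarith), div_eq_mul_inv]
  rw [hroot]
  refine ⟨sub_one_div_lt_one_div_exp_div_sub_one hlog_pos hlog_le_one hn_one, ?_⟩
  simpa only [one_div_div] using
    one_div_exp_sub_one_lt_one_div (div_pos hlog_pos (by linarith : (0 : ℝ) < n))

theorem stmt_6 (θ : ℝ) (hθ : 1 < θ) (hθe : θ ≤ Real.exp 1) (n : ℕ) (hn : 2 ≤ n)
    (hlog : (n : ℝ) > Real.log θ / Real.log 2) :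
    (n - 1 : ℝ) / Real.log θ < 1 / (θ ^ ((n : ℝ)⁻¹) - 1) ∧
    1 / (θ ^ ((n : ℝ)⁻¹) - 1) < (n : ℝ) / Real.log θ :=
  stmt_6_general θ hθ hθe n hn
end

section
/- Let θ be a real number with 1 < θ ≤ e, and let n be an integer with n > log θ / log 2 and n ≥ 2. Then ⌊(n − 1)/log θ⌋ ≤ M_θ(n) < n/log θ. -/
open Real

theorem stmt_7 (θ : ℝ) (hθ : 1 < θ) (hθe : θ ≤ Real.exp 1) (n : ℕ) (hn : 2 ≤ n)
    (hlog : (n : ℝ) > Real.log θ / Real.log 2) :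
    ⌊(n - 1 : ℝ) / Real.log θ⌋ ≤ M θ n ∧ (M θ n : ℝ) < (n : ℝ) / Real.log θ := by
  have hn0 : (0:ℝ) < n := by exact_mod_cast Nat.lt_of_lt_of_le (by norm_num) hn
  have hn2 : (2:ℝ) ≤ n := by exact_mod_cast hn
  have hlogθ : 0 < Real.log θ := Real.log_pos hθ
  set x : ℝ := Real.log θ / n with hx
  have hx0 : 0 < x := div_pos hlogθ hn0
  have hθx : θ ^ ((n : ℝ)⁻¹) = Real.exp x := by
    rw [Real.rpow_def_of_pos (by linarith), hx, div_eq_mul_inv]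
  have h2 : (0:ℝ) < Real.log 2 := Real.log_pos (by norm_num)
  have hxlog2 : x < Real.log 2 := by
    rw [hx, div_lt_iff₀ hn0]
    have h := (div_lt_iff₀ h2).mp hlog
    nlinarith
  have hexp1 : 1 < Real.exp x := by rw [← Real.exp_zero]; exact Real.exp_lt_exp.mpr hx0
  have hexp2 : Real.exp x < 2 := by
    calc Real.exp x < Real.exp (Real.log 2) := Real.exp_lt_exp.mpr hxlog2
    _ = 2 := Real.exp_log (by norm_num)
  have hfloor : ⌊Real.exp x⌋ = 1 := by
    rw [Int.floor_eq_iff]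
    constructor <;> push_cast <;> linarith
  have hfr : Int.fract (Real.exp x) = Real.exp x - 1 := by
    rw [Int.fract, hfloor]; norm_num
  set E : ℝ := Real.exp x - 1 with hE
  have hE0 : 0 < E := by linarith
  have hM : M θ n = ⌊1 / E⌋ := by rw [M, hθx, hfr]
  -- x ≤ 1/n, i.e. x * n ≤ 1
  have hlog1 : Real.log θ ≤ 1 := by
    calc Real.log θ ≤ Real.log (Real.exp 1) := Real.log_le_log (by linarith) hθe
    _ = 1 := Real.log_exp 1
  have hxn : x * n ≤ 1 := by
    rw [hx, div_mul_cancel₀ _ (ne_of_gt hn0)]; exact hlog1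
  have hx1 : x ≤ 1 := by nlinarith
  -- upper bound on exp
  have hEb : E ≤ x + (3/4) * x ^ 2 := by
    have h := Real.exp_bound' hx0.le hx1 (n := 2) (by norm_num)
    simp [Finset.sum_range_succ, Nat.factorial] at h
    rw [hE]; nlinarith
  have hEx : x < E := by
    have := Real.add_one_lt_exp (ne_of_gt hx0)
    linarith
  have hnlog : (n:ℝ) / Real.log θ = 1 / x := by
    rw [hx, one_div_div]
  constructor
  · rw [hM]
    apply Int.floor_le_floor
    rw [div_le_div_iff₀ hlogθ hE0]
    have hlogx : Real.log θ = n * x := by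
      rw [hx]; field_simp
    rw [hlogx]
    nlinarith
  · rw [hM, hnlog]
    calc ((⌊1 / E⌋ : ℝ)) ≤ 1 / E := Int.floor_le _
    _ < 1 / x := by apply one_div_lt_one_div_of_lt hx0 hEx
end

section
/- For every integer n ≥ 2, M_e(n) = n − 1, where e is Euler's number; moreover M_e(1) = 1. -/
open Real

theorem stmt_8 :
    (∀ n : ℕ, 2 ≤ n → M (Real.exp 1) n = (n : ℤ) - 1) ∧ M (Real.exp 1) 1 = 1 := by
  constructor
  · intro n hn
    have hn2 : (2:ℝ) ≤ (n:ℝ) := by exact_mod_cast hn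
    have hn0 : (0:ℝ) < (n:ℝ) := by linarith
    have hinv : (0:ℝ) < ((n:ℝ))⁻¹ := by positivity
    rw [M, Real.exp_one_rpow]
    set x := Real.exp ((n:ℝ)⁻¹) with hx
    have h1 : 1 + (n:ℝ)⁻¹ < x := by
      have := Real.add_one_lt_exp (x := ((n:ℝ))⁻¹) (by positivity)
      linarith
    have hneg : 1 - (n:ℝ)⁻¹ < Real.exp (-((n:ℝ))⁻¹) := by
      have := Real.add_one_lt_exp (x := -((n:ℝ))⁻¹) (by simp; positivity)
      linarith
    have hxpos : (0:ℝ) < x := Real.exp_pos _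
    have hmul : x * Real.exp (-((n:ℝ))⁻¹) = 1 := by
      rw [← Real.exp_add]; simp
    have hkey : x * (1 - (n:ℝ)⁻¹) < 1 := by
      nlinarith
    have hhalf : (n:ℝ)⁻¹ ≤ 1/2 := by
      rw [inv_le_comm₀ hn0 (by norm_num)]
      linarith
    have hx2 : x < 2 := by nlinarith
    have hx1 : 1 < x := by linarith
    have hfract : Int.fract x = x - 1 := by
      have hfl : ⌊x⌋ = 1 := by
        rw [Int.floor_eq_iff]
        constructor <;> [push_cast; push_cast] <;> linarith
      rw [Int.fract, hfl]; norm_num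
    rw [hfract]
    have hx1pos : (0:ℝ) < x - 1 := by linarith
    have hxn : x * ((n:ℝ) - 1) < n := by
      have h := mul_lt_mul_of_pos_right hkey hn0
      have heq : x * (1 - (n:ℝ)⁻¹) * n = x * ((n:ℝ) - 1) := by
        field_simp
      linarith [heq ▸ h]
    have hninv : (n:ℝ) * ((n:ℝ))⁻¹ = 1 := mul_inv_cancel₀ (ne_of_gt hn0)
    have hlow : 1 < (n:ℝ) * (x - 1) := by nlinarith
    rw [Int.floor_eq_iff]
    constructor
    · push_cast
      rw [le_div_iff₀ hx1pos]
      nlinarith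
    · push_cast
      rw [div_lt_iff₀ hx1pos]
      nlinarith
  · rw [M]
    have h2 : Real.exp 1 < 2.7182818286 := Real.exp_one_lt_d9
    have h3 : (2.7182818283 : ℝ) < Real.exp 1 := Real.exp_one_gt_d9
    have hsimp : ((1:ℕ):ℝ)⁻¹ = (1:ℝ) := by norm_num
    rw [hsimp, Real.rpow_one]
    have hfl : ⌊Real.exp 1⌋ = 2 := by
      rw [Int.floor_eq_iff]
      constructor <;> push_cast <;> linarith
    have hfract : Int.fract (Real.exp 1) = Real.exp 1 - 2 := by
      rw [Int.fract, hfl]; norm_num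
    rw [hfract]
    rw [Int.floor_eq_iff]
    have hpos : (0:ℝ) < Real.exp 1 - 2 := by linarith
    constructor
    · push_cast
      rw [le_div_iff₀ hpos]
      linarith
    · push_cast
      rw [div_lt_iff₀ hpos]
      linarith
end

section
/- Let θ > 1 be real, let n be a positive integer with n > log θ / log 2, and let x be a positive integer. Then M_θ(n) = x if and only if g(x)·log θ ≤ n < g(x+1)·log θ. -/
open Real

/-- `g x = 1 / log (1 + 1/x)`. -/
noncomputable def g (x : ℝ) : ℝ := 1 / Real.log (1 + 1 / x)

theorem stmt_9 (θ : ℝ) (hθ : 1 < θ) (n : ℕ) (hn : 0 < n)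
    (hlog : (n : ℝ) > Real.log θ / Real.log 2) (x : ℕ) (hx : 0 < x) :
    M θ n = (x : ℤ) ↔
      g x * Real.log θ ≤ (n : ℝ) ∧ (n : ℝ) < g (x + 1) * Real.log θ := by
  have hθ0 : (0:ℝ) < θ := lt_trans one_pos hθ
  have hlogθ : 0 < Real.log θ := Real.log_pos hθ
  have hn0 : (0:ℝ) < (n:ℝ) := by exact_mod_cast hn
  have hx0 : (0:ℝ) < (x:ℝ) := by exact_mod_cast hx
  set t := θ ^ ((n:ℝ)⁻¹) with htdef
  have hlogt : Real.log t = (n:ℝ)⁻¹ * Real.log θ := Real.log_rpow hθ0 _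
  have ht1 : 1 < t := by
    rw [htdef]
    exact Real.one_lt_rpow_iff_of_pos hθ0 |>.mpr (Or.inl ⟨hθ, by positivity⟩)
  have ht0 : (0:ℝ) < t := lt_trans one_pos ht1
  have ht2 : t < 2 := by
    have hl2 : 0 < Real.log 2 := Real.log_pos one_lt_two
    have h2 : Real.log θ < (n:ℝ) * Real.log 2 := by
      have := mul_lt_mul_of_pos_right hlog hl2
      rwa [div_mul_cancel₀ _ (ne_of_gt hl2)] at this
    have hlt : Real.log t < Real.log 2 := by
      rw [hlogt, inv_mul_lt_iff₀ hn0]; exact h2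
    have := Real.exp_lt_exp.mpr hlt
    rwa [Real.exp_log ht0, Real.exp_log (by norm_num)] at this
  have hfl : ⌊t⌋ = 1 := by
    rw [Int.floor_eq_iff]
    constructor <;> push_cast <;> linarith
  have hfr : Int.fract t = t - 1 := by
    rw [Int.fract, hfl]; norm_num
  have htm : (0:ℝ) < t - 1 := by linarith
  -- key equivalences
  have key : ∀ y : ℝ, 0 < y →
      (t ≤ 1 + 1 / y ↔ g y * Real.log θ ≤ (n:ℝ)) ∧
      (1 + 1 / y < t ↔ (n:ℝ) < g y * Real.log θ) := by
    intro y hy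
    have hL : 0 < Real.log (1 + 1 / y) := Real.log_pos (by nlinarith [one_div_pos.mpr hy])
    have hg : g y * Real.log θ = Real.log θ / Real.log (1 + 1 / y) := by
      rw [g]; ring
    have hp : (0:ℝ) < 1 + 1 / y := by positivity
    constructor
    · rw [hg, div_le_iff₀ hL]
      constructor
      · intro h
        have := Real.log_le_log ht0 h
        rw [hlogt, inv_mul_le_iff₀ hn0] at this
        linarith [this]
      · intro h
        have : Real.log t ≤ Real.log (1 + 1 / y) := by
          rw [hlogt, inv_mul_le_iff₀ hn0]; linarith
        have := Real.exp_le_exp.mpr this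
        rwa [Real.exp_log ht0, Real.exp_log hp] at this
    · rw [hg, lt_div_iff₀ hL]
      constructor
      · intro h
        have := Real.log_lt_log hp h
        rw [hlogt] at this
        rw [lt_inv_mul_iff₀ hn0] at this
        linarith
      · intro h
        have : Real.log (1 + 1 / y) < Real.log t := by
          rw [hlogt, lt_inv_mul_iff₀ hn0]; linarith
        have := Real.exp_lt_exp.mpr this
        rwa [Real.exp_log hp, Real.exp_log ht0] at this
  have hx1 : (0:ℝ) < (x:ℝ) + 1 := by linarith
  constructor
  · intro h
    rw [M, ← htdef, hfr, Int.floor_eq_iff] at h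
    push_cast at h
    obtain ⟨h1, h2⟩ := h
    rw [le_div_iff₀ htm] at h1
    rw [div_lt_iff₀ htm] at h2
    have hxx : (x:ℝ) * (1/(x:ℝ)) = 1 := by field_simp
    have hxx1 : ((x:ℝ)+1) * (1/((x:ℝ)+1)) = 1 := by field_simp
    constructor
    · refine ((key x hx0).1).mp ?_
      nlinarith
    · refine ((key ((x:ℝ)+1) hx1).2).mp ?_
      nlinarith
  · rintro ⟨h1, h2⟩
    rw [M, ← htdef, hfr, Int.floor_eq_iff]
    have ha : t ≤ 1 + 1 / x := ((key x hx0).1).mpr h1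
    have hb : 1 + 1 / ((x:ℝ)+1) < t := ((key ((x:ℝ)+1) hx1).2).mpr h2
    have hxx : (x:ℝ) * (1/(x:ℝ)) = 1 := by field_simp
    have hxx1 : ((x:ℝ)+1) * (1/((x:ℝ)+1)) = 1 := by field_simp
    constructor
    · push_cast
      rw [le_div_iff₀ htm]
      nlinarith
    · push_cast
      rw [div_lt_iff₀ htm]
      nlinarith
end

section
/- Let θ > 1 be real, let n be a positive integer with n > log θ / log 2, and let x = M_θ(n). Then (x + 1/2 − 1/x)·log θ ≤ n < (x + 3/2)·log θ. -/
open Real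

/-! Writing `t = θ^(1/n)`, the hypothesis on `n` gives `1 < t < 2`, so `x = ⌊1/(t - 1)⌋` and
`1 + 1/(x + 1) < t ≤ 1 + 1/x`. Since `log θ = n log t`, both bounds reduce to the two estimates
`(x + 1/2 - 1/x) log (1 + 1/x) ≤ 1` and `1 < (y + 1/2) log (1 + 1/y)` (for `y = x + 1`), which
follow from truncations of the exponential series. -/

lemma one_add_le_exp_div {u : ℝ} (hu : 0 < u) (hu1 : u ≤ 1) :
    1 + u ≤ exp (u / (1 + u / 2 - u ^ 2)) := by
  have hD : 0 < 1 + u / 2 - u ^ 2 := by nlinarith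
  set c := u / (1 + u / 2 - u ^ 2)
  have hcD : c * (1 + u / 2 - u ^ 2) = u := div_mul_cancel₀ _ hD.ne'
  have hc : 0 < c := div_pos hu hD
  have hexp : 1 + c + c ^ 2 / 2 + c ^ 3 / 6 ≤ exp c := by
    simpa [Finset.sum_range_succ, Nat.factorial] using sum_le_exp_of_nonneg hc.le 4
  nlinarith [mul_pos hc hu, mul_pos (mul_pos hc hu) hu, mul_pos hc hc]

lemma exp_div_lt_one_add {v : ℝ} (hv : 0 < v) (hv1 : v ≤ 1 / 2) :
    exp (2 * v / (2 + v)) < 1 + v := by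
  have hD : 0 < 2 + v := by linarith
  set c := 2 * v / (2 + v)
  have hcD : c * (2 + v) = 2 * v := div_mul_cancel₀ _ hD.ne'
  have hc : 0 < c := div_pos (by linarith) hD
  have hc1 : c ≤ 2 / 5 := by rw [div_le_iff₀ hD]; nlinarith
  have hexp := exp_bound' hc.le (by linarith) (n := 4) (by norm_num)
  norm_num [Finset.sum_range_succ, Nat.factorial] at hexp
  nlinarith [mul_pos hc hv, mul_pos hc hc, mul_pos (mul_pos hc hc) hc]

lemma mul_log_one_add_one_div_le_one {x : ℝ} (hx : 1 ≤ x) :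
    (x + 1 / 2 - 1 / x) * log (1 + 1 / x) ≤ 1 := by
  have hu : 0 < 1 / x := by positivity
  have hu1 : 1 / x ≤ 1 := (div_le_one (by linarith)).2 hx
  have hD : 0 < 1 + 1 / x / 2 - (1 / x) ^ 2 := by nlinarith
  have hlog : log (1 + 1 / x) ≤ 1 / x / (1 + 1 / x / 2 - (1 / x) ^ 2) :=
    (log_le_iff_le_exp (by positivity)).2 (one_add_le_exp_div hu hu1)
  calc (x + 1 / 2 - 1 / x) * log (1 + 1 / x)
      ≤ (x + 1 / 2 - 1 / x) * (1 / x / (1 + 1 / x / 2 - (1 / x) ^ 2)) :=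
        mul_le_mul_of_nonneg_left hlog (by linarith)
    _ = 1 := by
        rw [← mul_div_assoc, show (x + 1 / 2 - 1 / x) * (1 / x) = 1 + 1 / x / 2 - (1 / x) ^ 2 by
          field_simp, div_self hD.ne']

lemma one_lt_mul_log_one_add_one_div {y : ℝ} (hy : 2 ≤ y) :
    1 < (y + 1 / 2) * log (1 + 1 / y) := by
  have hv : 0 < 1 / y := by positivity
  have hv1 : 1 / y ≤ 1 / 2 := one_div_le_one_div_of_le two_pos hy
  have hlog : 2 * (1 / y) / (2 + 1 / y) < log (1 + 1 / y) :=
    (lt_log_iff_exp_lt (by positivity)).2 (exp_div_lt_one_add hv hv1)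
  calc 1 = (y + 1 / 2) * (2 * (1 / y) / (2 + 1 / y)) := by field_simp
    _ < (y + 1 / 2) * log (1 + 1 / y) := mul_lt_mul_of_pos_left hlog (by linarith)

lemma one_le_floor_one_div {s : ℝ} (hs : 0 < s) (hs1 : s ≤ 1) : 1 ≤ ⌊1 / s⌋ :=
  Int.le_floor.2 (by simpa using (one_le_div hs).2 hs1)

lemma le_one_div_floor_one_div {s : ℝ} (hs : 0 < s) (hs1 : s ≤ 1) :
    s ≤ 1 / (⌊1 / s⌋ : ℝ) := by
  have hx : (0 : ℝ) < ⌊1 / s⌋ := by exact_mod_cast one_le_floor_one_div hs hs1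
  rw [le_one_div hs hx]
  exact Int.floor_le _

lemma one_div_floor_one_div_add_one_lt {s : ℝ} (hs : 0 < s) :
    1 / ((⌊1 / s⌋ : ℝ) + 1) < s := by
  have hx : (0 : ℝ) < ⌊1 / s⌋ + 1 := by
    have : (0 : ℝ) ≤ ⌊1 / s⌋ := by exact_mod_cast Int.floor_nonneg.2 (by positivity)
    linarith
  rw [div_lt_iff₀ hx, ← div_lt_iff₀' hs]
  exact Int.lt_floor_add_one _

lemma rpow_inv_natCast_mem_Ioo {θ : ℝ} (hθ : 1 < θ) {n : ℕ} (hn : log θ / log 2 < n) :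
    θ ^ ((n : ℝ)⁻¹) ∈ Set.Ioo 1 2 := by
  have hlogθ : 0 < log θ := log_pos hθ
  have hn0 : (0 : ℝ) < n := (div_pos hlogθ (log_pos one_lt_two)).trans hn
  refine ⟨one_lt_rpow hθ (inv_pos.2 hn0), ?_⟩
  rw [← log_lt_log_iff (by positivity) two_pos, log_rpow (by linarith), inv_mul_eq_div,
    div_lt_iff₀ hn0, mul_comm]
  exact (div_lt_iff₀ (log_pos one_lt_two)).1 hn

lemma M_eq_floor {θ : ℝ} {n : ℕ} (ht : θ ^ ((n : ℝ)⁻¹) ∈ Set.Ioo 1 2) :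
    M θ n = ⌊1 / (θ ^ ((n : ℝ)⁻¹) - 1)⌋ := by
  have hfloor : ⌊θ ^ ((n : ℝ)⁻¹)⌋ = 1 := Int.floor_eq_iff.2 ⟨by simpa using ht.1.le, by
    simpa [one_add_one_eq_two] using ht.2⟩
  rw [M, Int.fract, hfloor, Int.cast_one]

theorem stmt_10_general (θ : ℝ) (hθ : 1 < θ) (n : ℕ)
    (hlog : (n : ℝ) > Real.log θ / Real.log 2) (x : ℤ) (hx : x = M θ n) :
    ((x : ℝ) + 1 / 2 - 1 / (x : ℝ)) * Real.log θ ≤ (n : ℝ) ∧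
    (n : ℝ) < ((x : ℝ) + 3 / 2) * Real.log θ := by
  have hn : (0 : ℝ) < n := (div_pos (log_pos hθ) (log_pos one_lt_two)).trans hlog
  set t := θ ^ ((n : ℝ)⁻¹)
  have ht : t ∈ Set.Ioo 1 2 := rpow_inv_natCast_mem_Ioo hθ hlog
  have hlogθ : log θ = n * log t := by
    rw [log_rpow (by linarith), mul_inv_cancel_left₀ hn.ne']
  have hs : 0 < t - 1 := by linarith [ht.1]
  have hs1 : t - 1 ≤ 1 := by linarith [ht.2]
  rw [M_eq_floor ht] at hx
  have hx1 : (1 : ℝ) ≤ x := by rw [hx]; exact_mod_cast one_le_floor_one_div hs hs1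
  have ht_le : t - 1 ≤ 1 / (x : ℝ) := hx ▸ le_one_div_floor_one_div hs hs1
  have ht_gt : 1 / ((x : ℝ) + 1) < t - 1 := hx ▸ one_div_floor_one_div_add_one_lt hs
  have hupper : log t ≤ log (1 + 1 / (x : ℝ)) := log_le_log (by linarith) (by linarith)
  have hlower : log (1 + 1 / ((x : ℝ) + 1)) < log t := log_lt_log (by positivity) (by linarith)
  constructor
  · have hcoef : 0 ≤ (x : ℝ) + 1 / 2 - 1 / x := by linarith [(div_le_one (by linarith)).2 hx1]
    calc _ = n * (((x : ℝ) + 1 / 2 - 1 / x) * log t) := by rw [hlogθ]; ring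
      _ ≤ n * 1 := by
          gcongr
          exact (mul_le_mul_of_nonneg_left hupper hcoef).trans
            (mul_log_one_add_one_div_le_one hx1)
      _ = n := mul_one _
  · have hkey := one_lt_mul_log_one_add_one_div (y := (x : ℝ) + 1) (by linarith)
    rw [add_assoc, show (1 : ℝ) + 1 / 2 = 3 / 2 by norm_num] at hkey
    calc (n : ℝ) = n * 1 := (mul_one _).symm
      _ < n * (((x : ℝ) + 3 / 2) * log t) := by
          gcongr
          exact hkey.trans_le (mul_le_mul_of_nonneg_left hlower.le (by linarith))
      _ = _ := by rw [hlogθ]; ring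

theorem stmt_10 (θ : ℝ) (hθ : 1 < θ) (n : ℕ) (hn : 0 < n)
    (hlog : (n : ℝ) > Real.log θ / Real.log 2) (x : ℤ) (hx : x = M θ n) :
    ((x : ℝ) + 1 / 2 - 1 / (x : ℝ)) * Real.log θ ≤ (n : ℝ) ∧
    (n : ℝ) < ((x : ℝ) + 3 / 2) * Real.log θ :=
  stmt_10_general θ hθ n hlog x hx
end

section
/- Let θ > 1 be real. If n₁ and n₂ are integers with n₂ > n₁ > log θ / log 2, then M_θ(n₂) − M_θ(n₁) < (n₂ − n₁)/log θ + 3/2. -/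
open Real

lemma key_ineq (x : ℝ) (hx : 0 ≤ x) : (Real.exp x - 1) * (2 - x) ≤ 2 * x := by
  have hmono : Monotone (fun y : ℝ => 2 * y - (Real.exp y - 1) * (2 - y)) := by
    have hdiff : Differentiable ℝ (fun y : ℝ => 2 * y - (Real.exp y - 1) * (2 - y)) := by
      fun_prop
    apply monotone_of_deriv_nonneg hdiff
    intro y
    have hd : HasDerivAt (fun y : ℝ => 2 * y - (Real.exp y - 1) * (2 - y))
        (2 - ((Real.exp y) * (2 - y) + (Real.exp y - 1) * (-1))) y := by
      have h1 : HasDerivAt (fun y : ℝ => 2 * y) 2 y := by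
        simpa using (hasDerivAt_id y).const_mul 2
      have h2 : HasDerivAt (fun y : ℝ => (Real.exp y - 1) * (2 - y))
          ((Real.exp y) * (2 - y) + (Real.exp y - 1) * (-1)) y := by
        exact (((Real.hasDerivAt_exp y).sub_const 1).mul
          (((hasDerivAt_id y).const_sub 2)))
      exact h1.sub h2
    rw [hd.deriv]
    have h := Real.add_one_le_exp (-y)
    have hy := Real.exp_pos y
    nlinarith [mul_le_mul_of_nonneg_right h hy.le, Real.exp_neg y, inv_mul_cancel₀ (ne_of_gt hy)]
  have := hmono hx
  simpa using this

/-- For `0 < x < 2`, `1/x - 1/2 ≤ 1/(e^x - 1)`. -/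
lemma inv_exp_sub_one_lb (x : ℝ) (hx0 : 0 < x) (hx2 : x < 2) :
    1 / x - 1 / 2 ≤ 1 / (Real.exp x - 1) := by
  have h1 : x < Real.exp x - 1 := by
    have := Real.add_one_lt_exp (ne_of_gt hx0)
    linarith
  have hpos : 0 < Real.exp x - 1 := by linarith
  have h2 := key_ineq x hx0.le
  rw [div_sub_div _ _ (ne_of_gt hx0) two_ne_zero, div_le_div_iff₀ (by positivity) hpos]
  nlinarith

/-- `M θ n` expressed via `exp`, with bounds. -/
lemma M_eq (θ : ℝ) (hθ : 1 < θ) (n : ℕ) (hn : 0 < (n : ℝ))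
    (hlt : Real.log θ / n < Real.log 2) :
    M θ n = ⌊1 / (Real.exp (Real.log θ / n) - 1)⌋ := by
  have hθ0 : (0:ℝ) < θ := by linarith
  have hrpow : θ ^ ((n : ℝ)⁻¹) = Real.exp (Real.log θ / n) := by
    rw [Real.rpow_def_of_pos hθ0, div_eq_mul_inv]
  have hx0 : 0 < Real.log θ / n := div_pos (Real.log_pos hθ) hn
  have h1 : 1 < Real.exp (Real.log θ / n) := by nlinarith [Real.add_one_lt_exp (ne_of_gt hx0)]
  have h2 : Real.exp (Real.log θ / n) < 2 := by
    calc Real.exp (Real.log θ / n) < Real.exp (Real.log 2) := Real.exp_lt_exp.mpr hlt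
    _ = 2 := Real.exp_log two_pos
  have hfloor : ⌊Real.exp (Real.log θ / n)⌋ = 1 := by
    apply Int.floor_eq_iff.mpr
    constructor <;> push_cast <;> linarith
  unfold M
  rw [hrpow, Int.fract, hfloor]
  norm_num

theorem stmt_11 (θ : ℝ) (hθ : 1 < θ) (n₁ n₂ : ℕ) (h12 : n₁ < n₂)
    (hlog : (n₁ : ℝ) > Real.log θ / Real.log 2) :
    (M θ n₂ : ℝ) - (M θ n₁ : ℝ) < ((n₂ : ℝ) - (n₁ : ℝ)) / Real.log θ + 3 / 2 := by
  have hL0 : 0 < Real.log θ := Real.log_pos hθ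
  have hlog2 : (0:ℝ) < Real.log 2 := Real.log_pos one_lt_two
  have hn1 : 0 < (n₁ : ℝ) := lt_trans (div_pos hL0 hlog2) hlog
  have hn2 : 0 < (n₂ : ℝ) := by
    have : (n₁ : ℝ) < n₂ := by exact_mod_cast h12
    linarith
  set L := Real.log θ with hLdef
  have hx₁lt : L / n₁ < Real.log 2 := by
    rw [div_lt_iff₀ hn1]
    calc L = (L / Real.log 2) * Real.log 2 := by field_simp
    _ < n₁ * Real.log 2 := by exact mul_lt_mul_of_pos_right hlog hlog2
    _ = Real.log 2 * n₁ := by ring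
  have hx₂lt : L / n₂ < L / n₁ := by
    apply div_lt_div_of_pos_left hL0 hn1
    exact_mod_cast h12
  have hlog2lt : Real.log 2 < 2 := by
    have := Real.log_le_sub_one_of_pos (two_pos (α := ℝ))
    linarith
  have hx₁0 : 0 < L / n₁ := div_pos hL0 hn1
  have hx₂0 : 0 < L / n₂ := div_pos hL0 hn2
  have hM1 := M_eq θ hθ n₁ hn1 hx₁lt
  have hM2 := M_eq θ hθ n₂ hn2 (lt_trans hx₂lt hx₁lt)
  -- upper bound for M θ n₂
  have hub : (M θ n₂ : ℝ) < (n₂ : ℝ) / L := by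
    rw [hM2]
    have h1 : L / n₂ < Real.exp (L / n₂) - 1 := by
      have := Real.add_one_lt_exp (ne_of_gt hx₂0); linarith
    calc ((⌊1 / (Real.exp (L / n₂) - 1)⌋ : ℤ) : ℝ) ≤ 1 / (Real.exp (L / n₂) - 1) :=
      Int.floor_le _
    _ < 1 / (L / n₂) := by
        apply one_div_lt_one_div_of_lt hx₂0 h1
    _ = (n₂ : ℝ) / L := one_div_div _ _
  -- lower bound for M θ n₁
  have hlb : (n₁ : ℝ) / L - 3 / 2 < (M θ n₁ : ℝ) := by
    rw [hM1]
    have h2 := inv_exp_sub_one_lb (L / n₁) hx₁0 (lt_trans hx₁lt hlog2lt)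
    have h3 : 1 / (Real.exp (L / n₁) - 1) - 1 < ((⌊1 / (Real.exp (L / n₁) - 1)⌋ : ℤ) : ℝ) :=
      Int.sub_one_lt_floor _
    have h4 : 1 / (L / n₁) = (n₁ : ℝ) / L := one_div_div _ _
    linarith
  have hsub : ((n₂ : ℝ) - (n₁ : ℝ)) / L = (n₂ : ℝ) / L - (n₁ : ℝ) / L := sub_div _ _ _
  linarith
end

section
/- Let θ > 1 be real and let n be a positive integer with n > log θ / log 2. Then M_θ(n) = ⌊n/log θ − 1/2⌋ or M_θ(n) = ⌊n/log θ + 1/2⌋. -/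
/-! With `t = θ^(1/n) ∈ (1, 2)` and `x = 1 / (t - 1)` one has `M θ n = ⌊x⌋` and
`n / log θ = 1 / log (1 + 1/x) = g x`. The bounds `2 / (2x + 1) ≤ log (1 + 1/x) ≤ 1/x`, the first
being the leading term of `log (1 + 1/x) = 2 ∑ (2x + 1)^(-(2k+1)) / (2k + 1)`, give
`x ≤ g x ≤ x + 1/2`, and every `x ∈ [y - 1/2, y]` has `⌊x⌋ = ⌊y - 1/2⌋` or `⌊x⌋ = ⌊y + 1/2⌋`. -/

open Real

theorem Int.floor_eq_floor_sub_half_or_floor_add_half {R : Type*} [Field R] [LinearOrder R]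
    [IsStrictOrderedRing R] [FloorRing R] {x y : R} (hxy : x ≤ y) (hyx : y ≤ x + 1 / 2) :
    ⌊x⌋ = ⌊y - 1 / 2⌋ ∨ ⌊x⌋ = ⌊y + 1 / 2⌋ := by
  have h₁ : ⌊y - 1 / 2⌋ ≤ ⌊x⌋ := Int.floor_le_floor (by linarith)
  have h₂ : ⌊x⌋ ≤ ⌊y + 1 / 2⌋ := Int.floor_le_floor (by linarith)
  have h₃ : ⌊y + 1 / 2⌋ = ⌊y - 1 / 2⌋ + 1 := by
    rw [← Int.floor_add_one]; ring_nf
  omega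

theorem Real.two_div_two_mul_add_one_le_log_one_add_inv {a : ℝ} (ha : 0 < a) :
    2 / (2 * a + 1) ≤ log (1 + a⁻¹) := by
  have h := le_hasSum (hasSum_log_one_add_inv ha) 0 fun k _ => by positivity
  norm_num at h
  rwa [div_eq_mul_inv]

theorem le_g {x : ℝ} (hx : 0 < x) : x ≤ g x := by
  have hlog : log (1 + 1 / x) ≤ 1 / x := by
    linarith [log_le_sub_one_of_pos (by positivity : 0 < 1 + 1 / x)]
  rw [g, le_div_iff₀ (log_pos (by simp [hx]))]
  calc x * log (1 + 1 / x) ≤ x * (1 / x) := by gcongr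
    _ = 1 := mul_one_div_cancel hx.ne'

theorem g_le_add_half {x : ℝ} (hx : 0 < x) : g x ≤ x + 1 / 2 := by
  have hlog := two_div_two_mul_add_one_le_log_one_add_inv hx
  rw [g, one_div x, div_le_iff₀ (log_pos (by simp [hx]))]
  calc 1 = (x + 1 / 2) * (2 / (2 * x + 1)) := by field_simp
    _ ≤ (x + 1 / 2) * log (1 + x⁻¹) := by gcongr

theorem one_lt_rpow_inv_lt_two {θ : ℝ} {n : ℕ} (hθ : 1 < θ) (hn : (n : ℝ) > log θ / log 2) :
    1 < θ ^ ((n : ℝ)⁻¹) ∧ θ ^ ((n : ℝ)⁻¹) < 2 := by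
  have hlogθ : 0 < log θ := log_pos hθ
  have hn₀ : (0 : ℝ) < n := lt_trans (by positivity) hn
  refine ⟨one_lt_rpow hθ (by positivity), ?_⟩
  rw [← log_lt_log_iff (by positivity) two_pos, log_rpow (by positivity), inv_mul_lt_iff₀ hn₀]
  rwa [gt_iff_lt, div_lt_iff₀ (log_pos one_lt_two)] at hn

theorem M_eq_floor_of_lt_two {θ : ℝ} {n : ℕ} (h₁ : 1 < θ ^ ((n : ℝ)⁻¹))
    (h₂ : θ ^ ((n : ℝ)⁻¹) < 2) : M θ n = ⌊1 / (θ ^ ((n : ℝ)⁻¹) - 1)⌋ := by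
  have hfloor : ⌊θ ^ ((n : ℝ)⁻¹)⌋ = 1 := by
    rw [Int.floor_eq_iff]; push_cast; constructor <;> linarith
  rw [M, Int.fract, hfloor, Int.cast_one]

theorem div_log_eq_g {θ : ℝ} {n : ℕ} (hθ : 0 < θ) :
    n / log θ = g (1 / (θ ^ ((n : ℝ)⁻¹) - 1)) := by
  rw [g, one_div_one_div, add_sub_cancel, log_rpow hθ, one_div, inv_mul_eq_div, inv_div]

theorem stmt_12_general (θ : ℝ) (hθ : 1 < θ) (n : ℕ)
    (hlog : (n : ℝ) > Real.log θ / Real.log 2) :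
    M θ n = ⌊(n : ℝ) / Real.log θ - 1 / 2⌋ ∨
    M θ n = ⌊(n : ℝ) / Real.log θ + 1 / 2⌋ := by
  obtain ⟨h₁, h₂⟩ := one_lt_rpow_inv_lt_two hθ hlog
  have hx : 0 < 1 / (θ ^ ((n : ℝ)⁻¹) - 1) := by simpa using h₁
  rw [M_eq_floor_of_lt_two h₁ h₂, div_log_eq_g (by positivity)]
  exact Int.floor_eq_floor_sub_half_or_floor_add_half (le_g hx) (g_le_add_half hx)

theorem stmt_12 (θ : ℝ) (hθ : 1 < θ) (n : ℕ) (hn : 0 < n)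
    (hlog : (n : ℝ) > Real.log θ / Real.log 2) :
    M θ n = ⌊(n : ℝ) / Real.log θ - 1 / 2⌋ ∨
    M θ n = ⌊(n : ℝ) / Real.log θ + 1 / 2⌋ :=
  stmt_12_general θ hθ n hlog
end

section
/- Let θ > 1 be real. There exist positive integers k, ℓ, and n₀ > log θ / log 2 such that M_θ(n + k) = M_θ(n) + ℓ for all integers n ≥ n₀ (i.e., M_θ is eventually linearly periodic) if and only if there exist positive integers k and ℓ such that θ = e^{k/ℓ}. -/
/-!
For `n > log θ / log 2` we have `1 < θ^(1/n) < 2`, so `M θ n = ⌊1 / (e^x - 1)⌋` with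
`x = log θ / n`, and `1/x - 1/2 < 1 / (e^x - 1) ≤ 1/x - 1/2 + x`. Hence `M θ n = n / log θ + O(1)`,
and a relation `M θ (n + k) = M θ n + ℓ` forces `ℓ = k / log θ`. Conversely, if `log θ = k / ℓ`
then `n / log θ - 1/2` lies in `(1 / 2k) ℤ`, and once `x < 1 / 2k` the error cannot carry it past
the next integer; so eventually `M θ n = ⌊n ℓ / k - 1/2⌋`, which grows by exactly `ℓ` as `n`
grows by `k`.
-/

open Real

lemma fract_exp_eq_exp_sub_one {y : ℝ} (h₀ : 0 ≤ y) (h₁ : y < log 2) :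
    Int.fract (exp y) = exp y - 1 := by
  refine Int.fract_eq_iff.2 ⟨by linarith [one_le_exp h₀], ?_, 1, by simp⟩
  linarith [(lt_log_iff_exp_lt two_pos).1 h₁]

lemma M_eq_floor_one_div_exp_sub_one {θ : ℝ} (hθ : 1 ≤ θ) {n : ℕ} (hn : log θ / n < log 2) :
    M θ n = ⌊1 / (exp (log θ / n) - 1)⌋ := by
  rw [M, rpow_def_of_pos (by linarith), ← div_eq_mul_inv,
    fract_exp_eq_exp_sub_one (div_nonneg (log_nonneg hθ) n.cast_nonneg) hn]

lemma one_div_sub_half_lt_one_div_exp_sub_one {x : ℝ} (h₀ : 0 < x) (h₁ : x ≤ 1) :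
    1 / x - 1 / 2 < 1 / (exp x - 1) := by
  have hexp := exp_bound' h₀.le h₁ (n := 4) (by norm_num)
  norm_num [Finset.sum_range_succ, Nat.factorial] at hexp
  have hpos : 0 < exp x - 1 := by linarith [add_one_lt_exp h₀.ne']
  rw [div_sub_div _ _ h₀.ne' two_ne_zero, div_lt_div_iff₀ (by positivity) hpos]
  nlinarith [pow_pos h₀ 3, pow_pos h₀ 4, pow_pos h₀ 5]

lemma one_div_exp_sub_one_le {x : ℝ} (h₀ : 0 < x) :
    1 / (exp x - 1) ≤ 1 / x - 1 / 2 + x := by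
  have hexp := sum_le_exp_of_nonneg h₀.le 4
  norm_num [Finset.sum_range_succ, Nat.factorial] at hexp
  have hpos : 0 < exp x - 1 := by linarith [add_one_lt_exp h₀.ne']
  have : 1 / x - 1 / 2 + x = (2 - x + 2 * x ^ 2) / (2 * x) := by field_simp
  rw [this, div_le_div_iff₀ hpos (by positivity)]
  nlinarith [pow_pos h₀ 3, pow_pos h₀ 4, pow_pos h₀ 5, sq_nonneg x]

lemma floor_eq_floor_intCast_div {a : ℤ} {b : ℕ} (hb : 0 < b) {y : ℝ}
    (h₁ : a / b ≤ y) (h₂ : y < a / b + 1 / b) : ⌊y⌋ = ⌊(a : ℝ) / b⌋ := by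
  set q := ⌊(a : ℝ) / b⌋
  have hb' : (0 : ℝ) < b := by exact_mod_cast hb
  have hlt : a < (q + 1) * b := by
    have h : ((a : ℤ) : ℝ) < ((q + 1) * b : ℤ) := by
      push_cast
      exact (div_lt_iff₀ hb').1 (Int.lt_floor_add_one _)
    exact Int.cast_lt.1 h
  rw [Int.floor_eq_iff]
  refine ⟨(Int.floor_le _).trans h₁, h₂.trans_le ?_⟩
  rw [← add_div, div_le_iff₀ hb']
  exact_mod_cast Int.add_one_le_of_lt hlt

lemma div_lt_log_two_of_div_log_two_lt {L t : ℝ} (hL : 0 < L) (ht : L / log 2 < t) :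
    L / t < log 2 :=
  have hlog2 : 0 < log 2 := log_pos one_lt_two
  (div_lt_comm₀ hlog2 ((div_pos hL hlog2).trans ht)).1 ht

lemma exists_M_eq_floor {θ : ℝ} (hθ : 1 < θ) {n : ℕ} (hn : log θ / log 2 < n) :
    ∃ y : ℝ, M θ n = ⌊y⌋ ∧ n / log θ - 1 / 2 < y ∧ y ≤ n / log θ - 1 / 2 + log θ / n := by
  have hL : 0 < log θ := log_pos hθ
  have hx := div_lt_log_two_of_div_log_two_lt hL hn
  have hn₀ : (0 : ℝ) < n := (div_pos hL (log_pos one_lt_two)).trans hn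
  refine ⟨_, M_eq_floor_one_div_exp_sub_one hθ.le hx, ?_, ?_⟩
  · simpa [one_div_div] using one_div_sub_half_lt_one_div_exp_sub_one (x := log θ / n)
      (by positivity) (by linarith [log_two_lt_d9])
  · simpa [one_div_div] using one_div_exp_sub_one_le (x := log θ / n) (by positivity)

lemma abs_M_sub_div_log_le {θ : ℝ} (hθ : 1 < θ) {n : ℕ} (hn : log θ / log 2 < n) :
    |(M θ n : ℝ) - n / log θ| ≤ 3 / 2 := by
  obtain ⟨y, hM, hy₁, hy₂⟩ := exists_M_eq_floor hθ hn
  have hx := div_lt_log_two_of_div_log_two_lt (log_pos hθ) hn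
  rw [hM, abs_le]
  constructor <;> linarith [Int.floor_le y, Int.sub_one_lt_floor y, log_two_lt_d9]

lemma M_eq_floor_of_eq_intCast_div {θ : ℝ} (hθ : 1 < θ) {n : ℕ} (hn : log θ / log 2 < n)
    {a : ℤ} {b : ℕ} (hb : 0 < b) (hab : n / log θ - 1 / 2 = a / b) (hbn : b * log θ < n) :
    M θ n = ⌊n / log θ - 1 / 2⌋ := by
  obtain ⟨y, hM, hy₁, hy₂⟩ := exists_M_eq_floor hθ hn
  have hbL : 0 < b * log θ := mul_pos (by exact_mod_cast hb) (log_pos hθ)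
  have hx : log θ / n < 1 / b := by
    rw [div_lt_div_iff₀ (hbL.trans hbn) (by exact_mod_cast hb)]; linarith
  rw [hM, hab]
  exact floor_eq_floor_intCast_div hb (by linarith) (by linarith)

lemma eq_mul_of_add_eq_of_abs_sub_mul_le {f : ℕ → ℝ} {c C d : ℝ} {k N : ℕ}
    (hf : ∀ n ≥ N, f (n + k) = f n + d) (hC : ∀ n ≥ N, |f n - n * c| ≤ C) : d = k * c := by
  have hiter : ∀ m : ℕ, f (N + m * k) = f N + m * d := by
    intro m
    induction m with
    | zero => simp
    | succ m ih =>
      rw [add_mul, one_mul, ← add_assoc, hf _ (by omega), ih]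
      push_cast; ring
  have hbdd : ∀ m : ℕ, m * |d - k * c| ≤ 2 * C := by
    intro m
    have h₁ := hC (N + m * k) (by omega)
    rw [hiter] at h₁
    push_cast at h₁
    calc (m : ℝ) * |d - k * c|
        = |m * (d - k * c)| := by rw [abs_mul, Nat.abs_cast]
      _ = |(f N + m * d - (N + m * k) * c) - (f N - N * c)| := by ring_nf
      _ ≤ C + C := (abs_sub _ _).trans (add_le_add h₁ (hC N le_rfl))
      _ = 2 * C := by ring
  by_contra h
  have hpos : 0 < |d - k * c| := abs_pos.2 (sub_ne_zero.2 h)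
  obtain ⟨m, hm⟩ := exists_nat_gt (2 * C / |d - k * c|)
  linarith [(div_lt_iff₀ hpos).1 hm, hbdd m]

theorem stmt_15 (θ : ℝ) (hθ : 1 < θ) :
    (∃ k ℓ n₀ : ℕ, 0 < k ∧ 0 < ℓ ∧ (n₀ : ℝ) > Real.log θ / Real.log 2 ∧
      ∀ n : ℕ, n₀ ≤ n → M θ (n + k) = M θ n + (ℓ : ℤ)) ↔
    (∃ k ℓ : ℕ, 0 < k ∧ 0 < ℓ ∧ θ = Real.exp ((k : ℝ) / (ℓ : ℝ))) := by
  constructor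
  · rintro ⟨k, ℓ, n₀, hk, hℓ, hn₀, hM⟩
    have hslope : (ℓ : ℝ) = k * (log θ)⁻¹ :=
      eq_mul_of_add_eq_of_abs_sub_mul_le (f := fun n ↦ (M θ n : ℝ)) (N := n₀)
        (fun n hn ↦ by simp [hM n hn])
        (fun n hn ↦ by
          simpa [div_eq_mul_inv] using
            abs_M_sub_div_log_le hθ (hn₀.trans_le (by exact_mod_cast hn)))
    refine ⟨k, ℓ, hk, hℓ, ?_⟩
    rw [← exp_log (zero_lt_one.trans hθ), hslope]
    field_simp
  · rintro ⟨k, ℓ, hk, hℓ, hθkℓ⟩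
    have hlog : log θ = k / ℓ := by rw [hθkℓ, log_exp]
    obtain ⟨n₀, hn₀⟩ := exists_nat_gt (max (log θ / log 2) (2 * k * log θ))
    have hM : ∀ n ≥ n₀, M θ n = ⌊n / log θ - 1 / 2⌋ := fun n hn ↦ by
      have hn' : max (log θ / log 2) (2 * k * log θ) < n := hn₀.trans_le (by exact_mod_cast hn)
      refine M_eq_floor_of_eq_intCast_div hθ (lt_of_le_of_lt (le_max_left _ _) hn')
        (a := 2 * n * ℓ - k) (b := 2 * k) (by omega) ?_ ?_
      · rw [hlog]; push_cast; field_simp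
      · push_cast; exact lt_of_le_of_lt (le_max_right _ _) hn'
    refine ⟨k, ℓ, n₀, hk, hℓ, lt_of_le_of_lt (le_max_left _ _) hn₀, fun n hn ↦ ?_⟩
    have hkℓ : (k : ℝ) / log θ = ℓ := by rw [hlog]; field_simp
    rw [hM n hn, hM (n + k) (by omega), Nat.cast_add, add_div, hkℓ, add_sub_right_comm,
      Int.floor_add_natCast]
end

section
/- For every real number x with 0 < x ≤ 1 and every integer n ≥ 2, e^x < (1 + x/n)^{n+1} < (1 + x/(n−1))^n. -/
/-! The lower bound is `log (1 + y) > 2y / (y + 2)` at `y = x / n`, multiplied by `n + 1`; this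
suffices as long as `x ≤ 2`. For the upper bound, `1 + x/(n-1) = (1 + x/n)(1 + t)` with
`t = x / ((n-1)(n+x))`, and Bernoulli's inequality gives `(1 + t)^n ≥ 1 + n t > 1 + x/n`
as long as `(n - 1) x < n`. -/

open Real

theorem exp_lt_one_add_div_pow_succ {x : ℝ} (hx0 : 0 < x) (hx2 : x ≤ 2) {n : ℕ} (hn : 0 < n) :
    exp x < (1 + x / n) ^ (n + 1) := by
  have hn' : (0 : ℝ) < n := by exact_mod_cast hn
  have hy : 0 < x / n := by positivity
  calc exp x ≤ exp ((n + 1 : ℕ) * (2 * (x / n) / (x / n + 2))) := by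
        gcongr
        rw [show 2 * (x / n) / (x / n + 2) = 2 * x / (x + 2 * n) by field_simp, mul_div_assoc',
          le_div_iff₀ (by positivity)]
        push_cast
        nlinarith
    _ < exp ((n + 1 : ℕ) * log (1 + x / n)) := by gcongr; exact lt_log_one_add_of_pos hy
    _ = (1 + x / n) ^ (n + 1) := by rw [exp_nat_mul, exp_log (by positivity)]

theorem one_add_div_pow_succ_lt_one_add_div_sub_one_pow {x : ℝ} (hx0 : 0 < x) {n : ℕ}
    (hn : 2 ≤ n) (hxn : (n - 1) * x < n) :
    (1 + x / n) ^ (n + 1) < (1 + x / ((n : ℝ) - 1)) ^ n := by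
  have hn1 : (0 : ℝ) < n - 1 := by
    have : (2 : ℝ) ≤ n := by exact_mod_cast hn
    linarith
  set t := x / ((n - 1) * (n + x)) with ht_def
  have ht : 0 < t := by positivity
  have hfactor : 1 + x / ((n : ℝ) - 1) = (1 + x / n) * (1 + t) := by
    rw [ht_def]
    field_simp
    ring
  have hstep : 1 + x / n < (1 + t) ^ n := calc
    1 + x / n < 1 + n * t := by
      rw [add_lt_add_iff_left, mul_div_assoc', div_lt_div_iff₀ (by positivity) (by positivity)]
      nlinarith
    _ ≤ (1 + t) ^ n := one_add_mul_le_pow (by linarith) n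
  calc (1 + x / n) ^ (n + 1) = (1 + x / n) ^ n * (1 + x / n) := pow_succ _ _
    _ < (1 + x / n) ^ n * (1 + t) ^ n := by gcongr
    _ = (1 + x / ((n : ℝ) - 1)) ^ n := by rw [hfactor, mul_pow]

theorem stmt_18 (x : ℝ) (hx0 : 0 < x) (hx1 : x ≤ 1) (n : ℕ) (hn : 2 ≤ n) :
    Real.exp x < (1 + x / n) ^ (n + 1) ∧
    (1 + x / n) ^ (n + 1) < (1 + x / ((n : ℝ) - 1)) ^ n := by
  have hn' : (2 : ℝ) ≤ n := by exact_mod_cast hn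
  exact ⟨exp_lt_one_add_div_pow_succ hx0 (by linarith) (by omega),
    one_add_div_pow_succ_lt_one_add_div_sub_one_pow hx0 hn (by nlinarith)⟩
end

section
/- Define g(x) = 1/log(1 + 1/x) for real x ≥ 1. Then g is strictly increasing on [1, ∞); for all x ≥ 1, x + 1/2 − 1/x ≤ g(x) < x + 1/2; and for all y ≥ x ≥ 1, y − x − 1/y < g(y) − g(x) < y − x + 1/x. -/
open Real

lemma Real.log_le_sub_inv_div_two {y : ℝ} (hy : 1 ≤ y) : log y ≤ (y - y⁻¹) / 2 :=
  sinh_log (by linarith) ▸ self_le_sinh_iff.2 (log_nonneg hy)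

lemma log_one_add_one_div_pos {x : ℝ} (hx : 0 < x) : 0 < log (1 + 1 / x) :=
  log_pos (lt_add_of_pos_right 1 (one_div_pos.2 hx))

lemma g_strictMonoOn : StrictMonoOn g (Set.Ioi 0) := by
  intro a (ha : 0 < a) b (hb : 0 < b) hab
  have hlog : log (1 + 1 / b) < log (1 + 1 / a) :=
    log_lt_log (by positivity) (by gcongr)
  exact one_div_lt_one_div_of_lt (log_one_add_one_div_pos hb) hlog

lemma g_lt_add_half {x : ℝ} (hx : 0 < x) : g x < x + 1 / 2 :=
  calc g x < 1 / (2 * (1 / x) / (1 / x + 2)) :=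
        one_div_lt_one_div_of_lt (by positivity) (lt_log_one_add_of_pos (one_div_pos.2 hx))
    _ = x + 1 / 2 := by field_simp; ring

lemma add_half_sub_inv_le_g {x : ℝ} (hx : 0 < x) : x + 1 / 2 - 1 / x ≤ g x := by
  have hsinh := log_le_sub_inv_div_two (y := 1 + 1 / x) (by simp [hx.le])
  calc x + 1 / 2 - 1 / x ≤ 2 * x * (x + 1) / (2 * x + 1) := by
        rw [le_div_iff₀ (by positivity)]
        field_simp
        nlinarith
    _ = 1 / ((1 + 1 / x - (1 + 1 / x)⁻¹) / 2) := by
        have hsub : 1 + 1 / x - (1 + 1 / x)⁻¹ = (2 * x + 1) / (x * (x + 1)) := by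
          field_simp
          ring
        rw [hsub]
        field_simp
    _ ≤ g x := one_div_le_one_div_of_le (log_one_add_one_div_pos hx) hsinh

theorem stmt_19 :
    StrictMonoOn g (Set.Ici (1 : ℝ)) ∧
    (∀ x : ℝ, 1 ≤ x → x + 1 / 2 - 1 / x ≤ g x ∧ g x < x + 1 / 2) ∧
    (∀ x y : ℝ, 1 ≤ x → x ≤ y →
      y - x - 1 / y < g y - g x ∧ g y - g x < y - x + 1 / x) := by
  have hbounds (x : ℝ) (hx : 1 ≤ x) : x + 1 / 2 - 1 / x ≤ g x ∧ g x < x + 1 / 2 :=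
    ⟨add_half_sub_inv_le_g (by linarith), g_lt_add_half (by linarith)⟩
  refine ⟨g_strictMonoOn.mono (Set.Ici_subset_Ioi.2 one_pos), hbounds, fun x y hx hxy => ?_⟩
  obtain ⟨hgx_ge, hgx_lt⟩ := hbounds x hx
  obtain ⟨hgy_ge, hgy_lt⟩ := hbounds y (hx.trans hxy)
  constructor <;> linarith
end
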